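/- arXiv:1904.12238 — 2 statements merged into one kernel-verified Lean document; each statement's English description precedes it below -/
import Mathlib

section
/- For positive reals K, γ̄, ϑ, letting s = ϑ + (1+K)/γ̄, one has ∫₀^∞ ((1+K)/γ̄) e^{-K - (1+K)γ/γ̄ - ϑγ} I₀(2√(K(K+1)γ/γ̄)) dγ = (1/(1 + ϑγ̄/(K+1))) · exp(K/(1 + ϑγ̄/(K+1)) - K), where I₀(x) = Σ_{n≥0} (x/2)^{2n}/(n! Γ(n+1)) is the modified Bessel function of the first kind of order 0. -/
open MeasureTheory Real

noncomputable def besselI0 (x : ℝ) : ℝ :=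
  ∑' n : ℕ, (x / 2) ^ (2 * n) / (n.factorial * Real.Gamma (n + 1))

lemma key_int {s : ℝ} (hs : 0 < s) (n : ℕ) :
    ∫ t in Set.Ioi (0 : ℝ), t ^ n * Real.exp (-(s * t))
      = n.factorial / s ^ (n + 1) := by
  have h := integral_rpow_mul_exp_neg_mul_Ioi (a := (n : ℝ) + 1) (r := s)
    (by positivity) hs
  rw [show ((n : ℝ) + 1 - 1) = (n : ℝ) by ring, Real.Gamma_nat_eq_factorial] at h
  rw [setIntegral_congr_fun measurableSet_Ioi
    (fun t (ht : t ∈ Set.Ioi (0:ℝ)) => by rw [Real.rpow_natCast])] at h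
  rw [h, show ((n:ℝ)+1) = ((n+1 : ℕ) : ℝ) by push_cast; ring, Real.rpow_natCast,
    div_pow, one_pow]
  field_simp

lemma key_integrable {s : ℝ} (hs : 0 < s) (n : ℕ) :
    IntegrableOn (fun t : ℝ => t ^ n * Real.exp (-(s * t))) (Set.Ioi 0) := by
  have h := integrableOn_rpow_mul_exp_neg_mul_rpow (p := 1) (s := (n : ℝ)) (b := s)
    (by exact_mod_cast lt_of_lt_of_le (by norm_num : (-1:ℝ) < 0) (Nat.cast_nonneg n))
    one_pos hs
  apply h.congr_fun _ measurableSet_Ioi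
  intro t ht
  simp [Real.rpow_one, Real.rpow_natCast, neg_mul]

theorem stmt_4 (K γbar ϑ : ℝ) (hK : 0 < K) (hγ : 0 < γbar) (hϑ : 0 < ϑ) :
    ∫ γ in Set.Ioi (0 : ℝ),
        ((1 + K) / γbar) * Real.exp (-K - (1 + K) * γ / γbar - ϑ * γ) *
          besselI0 (2 * Real.sqrt (K * (K + 1) * γ / γbar))
      = (1 / (1 + ϑ * γbar / (K + 1))) *
          Real.exp (K / (1 + ϑ * γbar / (K + 1)) - K) := by
  set s : ℝ := ϑ + (1 + K) / γbar with hs_def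
  have hs : 0 < s := by positivity
  set a : ℝ := K * (K + 1) / γbar with ha_def
  have ha : 0 < a := by positivity
  set F : ℕ → ℝ → ℝ := fun n γ =>
    ((1 + K) / γbar * Real.exp (-K) * (a ^ n / ((n.factorial : ℝ) * n.factorial))) *
      (γ ^ n * Real.exp (-(s * γ))) with hF_def
  have hval : ∀ n : ℕ, ∫ γ in Set.Ioi (0 : ℝ), F n γ
      = (1 + K) / γbar * Real.exp (-K) / s * ((a / s) ^ n / n.factorial) := by
    intro n
    rw [hF_def]
    rw [integral_const_mul, key_int hs n]
    have hn : (0:ℝ) < n.factorial := by positivity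
    field_simp
    rw [pow_succ, mul_right_comm, ← mul_pow, mul_div_cancel₀ a hs.ne']
  have hint : ∀ n : ℕ, IntegrableOn (F n) (Set.Ioi 0) := fun n =>
    (key_integrable hs n).const_mul _
  have hnorm : ∀ n : ℕ, ∫ γ in Set.Ioi (0 : ℝ), ‖F n γ‖
      = (1 + K) / γbar * Real.exp (-K) / s * ((a / s) ^ n / n.factorial) := by
    intro n
    rw [← hval n]
    refine setIntegral_congr_fun measurableSet_Ioi fun t ht => ?_
    have htp : (0:ℝ) < t := ht
    simp only [Real.norm_eq_abs]
    rw [abs_of_nonneg]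
    rw [hF_def]
    positivity
  have hsum : Summable fun n : ℕ => ∫ γ in Set.Ioi (0 : ℝ), ‖F n γ‖ := by
    simp_rw [hnorm]
    exact (Real.summable_pow_div_factorial (a / s)).mul_left _
  have hpt : ∀ γ ∈ Set.Ioi (0:ℝ),
      ((1 + K) / γbar) * Real.exp (-K - (1 + K) * γ / γbar - ϑ * γ) *
        besselI0 (2 * Real.sqrt (K * (K + 1) * γ / γbar)) = ∑' n, F n γ := by
    intro γ hγ'
    have hγ0 : (0:ℝ) ≤ γ := le_of_lt hγ'
    have haγ : (0:ℝ) ≤ K * (K + 1) * γ / γbar := by positivity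
    have hb : besselI0 (2 * Real.sqrt (K * (K + 1) * γ / γbar))
        = ∑' n : ℕ, (a * γ) ^ n / ((n.factorial : ℝ) * n.factorial) := by
      unfold besselI0
      refine tsum_congr fun n => ?_
      rw [Real.Gamma_nat_eq_factorial]
      congr 1
      rw [show (2 * Real.sqrt (K * (K + 1) * γ / γbar)) / 2
          = Real.sqrt (K * (K + 1) * γ / γbar) by ring,
        pow_mul, Real.sq_sqrt haγ, ha_def]
      ring
    rw [hb, ← tsum_mul_left]
    refine tsum_congr fun n => ?_
    have he : -K - (1 + K) * γ / γbar - ϑ * γ = -K + -(s * γ) := by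
      rw [hs_def]; field_simp; ring
    rw [he, Real.exp_add, mul_pow, hF_def]
    ring
  rw [setIntegral_congr_fun measurableSet_Ioi hpt,
    ← integral_tsum_of_summable_integral_norm hint hsum]
  simp_rw [hval]
  rw [tsum_mul_left]
  have hexp : (∑' n : ℕ, (a / s) ^ n / (n.factorial : ℝ)) = Real.exp (a / s) := by
    rw [Real.exp_eq_exp_ℝ, NormedSpace.exp_eq_tsum_div]
  rw [hexp]
  have hKs : (0:ℝ) < K + 1 := by linarith
  have hden : 1 + ϑ * γbar / (K + 1) = γbar * s / (K + 1) := by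
    rw [hs_def]; field_simp; ring
  have hdenpos : (0:ℝ) < γbar * s := by positivity
  have e1 : K / (1 + ϑ * γbar / (K + 1)) = a / s := by
    rw [hden, ha_def]; field_simp
  have e2 : 1 / (1 + ϑ * γbar / (K + 1)) = (1 + K) / γbar / s := by
    rw [hden]; field_simp; ring
  rw [e1, e2, show a / s - K = -K + a / s by ring, Real.exp_add]
  ring
end

section
/- For positive real K, the function f(γ) = ((1+K)/γ̄) e^{-K - (1+K)γ/γ̄} I₀(2√(K(K+1)γ/γ̄)) integrates to 1 over (0,∞), for any γ̄ > 0. -/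
open MeasureTheory Real

theorem aux_int (c : ℝ) (hc : 0 < c) (n : ℕ) :
    ∫ γ in Set.Ioi (0:ℝ), γ ^ n * Real.exp (-(c * γ)) = n.factorial / c ^ (n+1) := by
  have h := Real.integral_rpow_mul_exp_neg_mul_Ioi (a := (n:ℝ)+1) (by positivity) hc
  rw [show ((n:ℝ)+1) - 1 = (n:ℝ) by ring] at h
  rw [setIntegral_congr_fun measurableSet_Ioi
    (fun t ht => by rw [← Real.rpow_natCast t n]), h, Real.Gamma_nat_eq_factorial,
    show ((n:ℝ)+1) = ((n+1 : ℕ) : ℝ) by push_cast; ring, Real.rpow_natCast]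
  rw [one_div, inv_pow, inv_mul_eq_div]

theorem aux_integrable (c : ℝ) (hc : 0 < c) (n : ℕ) :
    IntegrableOn (fun γ : ℝ => γ ^ n * Real.exp (-(c * γ))) (Set.Ioi 0) := by
  have h := integrableOn_rpow_mul_exp_neg_mul_rpow (s := (n:ℝ)) (p := 1)
    (neg_one_lt_zero.trans_le (Nat.cast_nonneg n)) one_pos hc
  refine h.congr_fun (fun t ht => ?_) measurableSet_Ioi
  beta_reduce
  rw [Real.rpow_natCast, Real.rpow_one, neg_mul]

theorem stmt_5 (K γbar : ℝ) (hK : 0 < K) (hγ : 0 < γbar) :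
    ∫ γ in Set.Ioi (0 : ℝ),
        ((1 + K) / γbar) * Real.exp (-K - (1 + K) * γ / γbar) *
          besselI0 (2 * Real.sqrt (K * (K + 1) * γ / γbar))
      = 1 := by
  set c : ℝ := (1 + K) / γbar with hc_def
  have hc : 0 < c := by positivity
  set g : ℕ → ℝ → ℝ := fun n γ =>
    (c * Real.exp (-K)) * ((K * c) ^ n / ((n.factorial : ℝ)) ^ 2) *
      (γ ^ n * Real.exp (-(c * γ))) with hg_def
  have hInt : ∀ n, IntegrableOn (g n) (Set.Ioi 0) := fun n =>
    (aux_integrable c hc n).const_mul _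
  have hval : ∀ n, ∫ γ in Set.Ioi (0:ℝ), g n γ
      = Real.exp (-K) * (K ^ n / (n.factorial : ℝ)) := by
    intro n
    rw [hg_def]
    simp only
    rw [integral_const_mul, aux_int c hc n, mul_pow]
    have hfac : (0:ℝ) < (n.factorial : ℝ) := by positivity
    field_simp
    ring
  have hnormval : ∀ n, ∫ γ in Set.Ioi (0:ℝ), ‖g n γ‖
      = Real.exp (-K) * (K ^ n / (n.factorial : ℝ)) := by
    intro n
    rw [← hval n]
    refine setIntegral_congr_fun measurableSet_Ioi (fun γ hγ' => ?_)
    have : 0 ≤ g n γ := by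
      have : (0:ℝ) < γ := hγ'
      rw [hg_def]; positivity
    exact Real.norm_of_nonneg this
  have hsummable : Summable (fun n => Real.exp (-K) * (K ^ n / (n.factorial : ℝ))) :=
    (Real.summable_pow_div_factorial K).mul_left _
  have hswap := MeasureTheory.integral_tsum_of_summable_integral_norm
    (μ := volume.restrict (Set.Ioi (0:ℝ))) hInt (by simpa only [hnormval] using hsummable)
  have hpt : ∀ γ ∈ Set.Ioi (0:ℝ),
      ((1 + K) / γbar) * Real.exp (-K - (1 + K) * γ / γbar) *
        besselI0 (2 * Real.sqrt (K * (K + 1) * γ / γbar)) = ∑' n, g n γ := by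
    intro γ hγ'
    have hγ0 : (0:ℝ) < γ := hγ'
    have ht : (0:ℝ) ≤ K * (K + 1) * γ / γbar := by positivity
    have hb : besselI0 (2 * Real.sqrt (K * (K + 1) * γ / γbar))
        = ∑' n : ℕ, (K * c * γ) ^ n / ((n.factorial : ℝ)) ^ 2 := by
      unfold besselI0
      congr 1; funext n
      rw [mul_div_cancel_left₀ _ (two_ne_zero), pow_mul,
        Real.sq_sqrt ht, Real.Gamma_nat_eq_factorial]
      congr 1
      · congr 1; rw [hc_def]; ring
      · rw [sq]
    rw [hb, ← tsum_mul_left]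
    congr 1; funext n
    rw [hg_def]
    simp only
    have hexp : Real.exp (-K - (1 + K) * γ / γbar) = Real.exp (-K) * Real.exp (-(c * γ)) := by
      rw [← Real.exp_add, hc_def]; ring_nf
    rw [hexp, mul_pow, mul_pow]
    ring
  rw [setIntegral_congr_fun measurableSet_Ioi hpt, ← hswap]
  simp only [hval]
  rw [tsum_mul_left]
  have : ∑' n : ℕ, K ^ n / (n.factorial : ℝ) = Real.exp K := by
    rw [Real.exp_eq_exp_ℝ, NormedSpace.exp_eq_tsum_div]
  rw [this, ← Real.exp_add]
  simp
end
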